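/- If A, B are positive invertible operators with h·A ≤ B ≤ h'·A for some 1 < h ≤ h' (or 0 < h' ≤ ... ≤ h < 1), then for all ν ∈ [0,1], K(h)^r · (A #_ν B) ≤ (1−ν)A + νB, where r = min{ν,1−ν} and K(h) = (h+1)²/(4h). -/

import Mathlib

/-!
For every scalar `x > 0` the refined Young inequality
`K(x)^r x^ν ≤ (1 - ν) + ν x` follows from weighted AM-GM applied to the three numbers
`(x + 1)/2`, `x`, `1` with weights `2r`, `ν - r`, `1 - ν - r`, since `K(x) x = ((x + 1)/2)^2`;
monotonicity of `K` on `[1, ∞)` lets us replace `K(x)` by `K(h)` when `x ≥ h ≥ 1`. Applying this to the spectrum of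
`C = A^{-1/2} B A^{-1/2} ≥ h` through the continuous functional calculus gives
`K(h)^r C^ν ≤ (1 - ν) + ν C`, and conjugating by `A^{1/2}` yields the theorem.
-/

/-- The Kantorovich constant. -/
noncomputable def Kc (x : ℝ) : ℝ := (x + 1) ^ 2 / (4 * x)

/-- The weighted operator geometric mean `A #_ν B`. -/
noncomputable def sharp {𝒜 : Type*} [CStarAlgebra 𝒜] [PartialOrder 𝒜] [StarOrderedRing 𝒜] (ν : ℝ) (a b : 𝒜) : 𝒜 :=
  CFC.rpow a (1/2) * CFC.rpow (CFC.rpow a (-(1/2)) * b * CFC.rpow a (-(1/2))) ν * CFC.rpow a (1/2)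

lemma Kc_nonneg {x : ℝ} (hx : 0 ≤ x) : 0 ≤ Kc x := by
  unfold Kc
  positivity

lemma Kc_mul_self {x : ℝ} (hx : x ≠ 0) : Kc x * x = ((x + 1) / 2) ^ 2 := by
  unfold Kc
  field_simp
  ring

lemma Kc_le_Kc {h x : ℝ} (hh : 1 ≤ h) (hx : h ≤ x) : Kc h ≤ Kc x := by
  unfold Kc
  rw [div_le_div_iff₀ (by linarith) (by linarith)]
  nlinarith [mul_nonneg (sub_nonneg.2 hx) (by nlinarith : (0:ℝ) ≤ x * h - 1)]

/-- Refined Young inequality with the Kantorovich constant. -/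
lemma Kc_rpow_mul_rpow_le {x ν : ℝ} (hx : 0 < x) (hν0 : 0 ≤ ν) (hν1 : ν ≤ 1) :
    Kc x ^ min ν (1 - ν) * x ^ ν ≤ (1 - ν) + ν * x := by
  set r := min ν (1 - ν)
  have hrν : r ≤ ν := min_le_left _ _
  have hr1ν : r ≤ 1 - ν := min_le_right _ _
  have hsplit : Kc x ^ r * x ^ ν = ((x + 1) / 2) ^ (2 * r) * x ^ (ν - r) * 1 ^ (1 - r - ν) := by
    rw [Real.one_rpow, mul_one, Real.rpow_mul (by positivity), Real.rpow_two, ← Kc_mul_self hx.ne',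
      Real.mul_rpow (Kc_nonneg hx.le) hx.le, mul_assoc, ← Real.rpow_add hx, add_sub_cancel]
  rw [hsplit]
  calc ((x + 1) / 2) ^ (2 * r) * x ^ (ν - r) * 1 ^ (1 - r - ν)
      ≤ 2 * r * ((x + 1) / 2) + (ν - r) * x + (1 - r - ν) * 1 :=
        Real.geom_mean_le_arith_mean3_weighted (by linarith [le_min hν0 (sub_nonneg.2 hν1)])
          (by linarith) (by linarith) (by positivity) hx.le zero_le_one (by ring)
    _ = (1 - ν) + ν * x := by ring

lemma Kc_rpow_mul_rpow_le_of_le {h x ν : ℝ} (hh : 1 ≤ h) (hx : h ≤ x) (hν0 : 0 ≤ ν)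
    (hν1 : ν ≤ 1) : Kc h ^ min ν (1 - ν) * x ^ ν ≤ (1 - ν) + ν * x := by
  calc Kc h ^ min ν (1 - ν) * x ^ ν ≤ Kc x ^ min ν (1 - ν) * x ^ ν :=
        mul_le_mul_of_nonneg_right
          (Real.rpow_le_rpow (Kc_nonneg (by linarith)) (Kc_le_Kc hh hx) (le_min hν0 (sub_nonneg.2 hν1)))
          (Real.rpow_nonneg (by linarith) _)
    _ ≤ (1 - ν) + ν * x := Kc_rpow_mul_rpow_le (by linarith) hν0 hν1

section CStarAlgebra

variable {𝒜 : Type*} [CStarAlgebra 𝒜] [PartialOrder 𝒜] [StarOrderedRing 𝒜]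

lemma Kc_rpow_smul_rpow_le {C : 𝒜} {h ν : ℝ} (hh : 1 ≤ h) (hC : h • (1 : 𝒜) ≤ C)
    (hν0 : 0 ≤ ν) (hν1 : ν ≤ 1) :
    Kc h ^ min ν (1 - ν) • C ^ ν ≤ (1 - ν) • (1 : 𝒜) + ν • C := by
  have hC0 : 0 ≤ C := (smul_nonneg (by linarith) zero_le_one).trans hC
  have hCsa : IsSelfAdjoint C := .of_nonneg hC0
  have hspec : ∀ x ∈ spectrum ℝ C, h ≤ x :=
    (algebraMap_le_iff_le_spectrum hCsa).mp (by rwa [Algebra.algebraMap_eq_smul_one])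
  have hcont : ContinuousOn (fun x : ℝ => x ^ ν) (spectrum ℝ C) := fun x _ =>
    (Real.continuousAt_rpow_const x ν (Or.inr hν0)).continuousWithinAt
  have haffine : cfc (fun x : ℝ => (1 - ν) + ν * x) C = (1 - ν) • (1 : 𝒜) + ν • C := by
    rw [cfc_const_add (1 - ν) (fun x => ν * x) C, cfc_const_mul_id ν C,
      Algebra.algebraMap_eq_smul_one]
  rw [CFC.rpow_eq_cfc_real hC0, ← cfc_smul _ _ C hcont, ← haffine]
  exact cfc_mono (fun x hx => Kc_rpow_mul_rpow_le_of_le hh (hspec x hx) hν0 hν1)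
    (hcont.const_smul (Kc h ^ min ν (1 - ν)))

lemma rpow_half_mul_rpow_half {A : 𝒜} (hA : 0 ≤ A) :
    A ^ (1 / 2 : ℝ) * A ^ (1 / 2 : ℝ) = A := by
  simpa only [CFC.sqrt_eq_rpow] using CFC.sqrt_mul_sqrt_self A hA

lemma rpow_half_conj_rpow_neg_half_conj {A : 𝒜} (hA : IsStrictlyPositive A) (X : 𝒜) :
    A ^ (1 / 2 : ℝ) * (A ^ (-(1 / 2) : ℝ) * X * A ^ (-(1 / 2) : ℝ)) * A ^ (1 / 2 : ℝ) = X := by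
  have hPM : A ^ (1 / 2 : ℝ) * A ^ (-(1 / 2) : ℝ) = 1 := CFC.rpow_mul_rpow_neg _ hA
  have hMP : A ^ (-(1 / 2) : ℝ) * A ^ (1 / 2 : ℝ) = 1 := CFC.rpow_neg_mul_rpow _ hA
  simp only [← mul_assoc, hPM, one_mul]
  rw [mul_assoc, hMP, mul_one]

end CStarAlgebra

theorem stmt15_general {𝒜 : Type*} [CStarAlgebra 𝒜] [PartialOrder 𝒜] [StarOrderedRing 𝒜]
    (A B : 𝒜) (hA : 0 ≤ A) [Invertible A]
    (h : ℝ) (hh : 1 < h)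
    (h1 : h • (1:𝒜) ≤ CFC.rpow A (-(1/2)) * B * CFC.rpow A (-(1/2)))
    (ν : ℝ) (hν : ν ∈ Set.Icc (0:ℝ) 1) :
    Kc h ^ (min ν (1 - ν)) • sharp ν A B ≤ (1 - ν) • A + ν • B := by
  set P : 𝒜 := CFC.rpow A (1 / 2)
  set C : 𝒜 := CFC.rpow A (-(1 / 2)) * B * CFC.rpow A (-(1 / 2))
  have hkey := (IsSelfAdjoint.of_nonneg (CFC.rpow_nonneg : 0 ≤ P)).conjugate_le_conjugate
    (Kc_rpow_smul_rpow_le hh.le h1 hν.1 hν.2)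
  have hPP : P * P = A := rpow_half_mul_rpow_half hA
  have hPCP : P * C * P = B :=
    rpow_half_conj_rpow_neg_half_conj ((isUnit_of_invertible A).isStrictlyPositive hA) B
  calc Kc h ^ min ν (1 - ν) • sharp ν A B
      = P * (Kc h ^ min ν (1 - ν) • CFC.rpow C ν) * P := by
        rw [sharp, mul_smul_comm, smul_mul_assoc]
    _ ≤ P * ((1 - ν) • (1 : 𝒜) + ν • C) * P := hkey
    _ = (1 - ν) • (P * P) + ν • (P * C * P) := by
        simp only [mul_add, add_mul, mul_smul_comm, smul_mul_assoc, mul_one]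
    _ = (1 - ν) • A + ν • B := by
        rw [hPP, hPCP]

theorem stmt15 {𝒜 : Type*} [CStarAlgebra 𝒜] [PartialOrder 𝒜] [StarOrderedRing 𝒜]
    (A B : 𝒜) (hA : 0 ≤ A) (hB : 0 ≤ B) [Invertible A] [Invertible B]
    (h h' : ℝ) (hh : 1 < h) (hhh' : h ≤ h')
    (h1 : h • (1:𝒜) ≤ CFC.rpow A (-(1/2)) * B * CFC.rpow A (-(1/2)))
    (h2 : CFC.rpow A (-(1/2)) * B * CFC.rpow A (-(1/2)) ≤ h' • (1:𝒜))
    (ν : ℝ) (hν : ν ∈ Set.Icc (0:ℝ) 1) :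
    Kc h ^ (min ν (1 - ν)) • sharp ν A B ≤ (1 - ν) • A + ν • B :=
  stmt15_general A B hA h hh h1 ν hν
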